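/- arXiv:math/0506319 — 2 statements merged into one kernel-verified Lean document; each statement's English description precedes it below -/
import Mathlib

section
/- ∫_0^1 ∫_0^1 (1+x)/((1+xy)(−ln(xy))) dx dy = ln π and ∫_0^1 ∫_0^1 (1−x)/((1+xy)(−ln(xy))) dx dy = ln(4/π). -/
open MeasureTheory intervalIntegral Real Set Filter


lemma frullani {a b : ℝ} (ha : 0 ≤ a) (hab : a ≤ b) :
    ∫ x in (0:ℝ)..1, (x ^ a - x ^ b) / (-Real.log x) = Real.log ((b+1)/(a+1)) := by
  haveI h1 : IsFiniteMeasure (volume.restrict (Set.Ioo (0:ℝ) 1)) :=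
    ⟨by simp [Measure.restrict_apply_univ]⟩
  haveI h2 : IsFiniteMeasure (volume.restrict (Set.Ioc a b)) :=
    ⟨by simp [Measure.restrict_apply_univ]⟩
  rw [intervalIntegral.integral_of_le zero_le_one, MeasureTheory.integral_Ioc_eq_integral_Ioo]
  have key : ∀ x ∈ Set.Ioo (0:ℝ) 1,
      (x ^ a - x ^ b) / (-Real.log x) = ∫ c in Set.Ioc a b, x ^ c := by
    intro x hx
    have hx0 : 0 < x := hx.1
    have hlog : Real.log x < 0 := Real.log_neg hx0 hx.2
    have hD : ∀ c : ℝ, HasDerivAt (fun c => Real.exp (c * Real.log x) / Real.log x) (x ^ c) c := by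
      intro c
      have h1 : HasDerivAt (fun c : ℝ => c * Real.log x) (Real.log x) c :=
        hasDerivAt_mul_const _
      have h2 := (Real.hasDerivAt_exp (c * Real.log x)).comp c h1
      have h3 := h2.div_const (Real.log x)
      have h4 : x ^ c = Real.exp (c * Real.log x) * Real.log x / Real.log x := by
        rw [Real.rpow_def_of_pos hx0, mul_comm (Real.log x) c, mul_div_assoc,
          div_self hlog.ne, mul_one]
      rw [h4]; exact h3
    have hcont : Continuous fun c : ℝ => x ^ c := by
      simp only [Real.rpow_def_of_pos hx0]
      exact Real.continuous_exp.comp (continuous_const.mul continuous_id)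
    have := intervalIntegral.integral_eq_sub_of_hasDerivAt (f := fun c => Real.exp (c * Real.log x) / Real.log x)
      (a := a) (b := b) (fun c _ => hD c) (hcont.intervalIntegrable a b)
    rw [← intervalIntegral.integral_of_le hab, this, Real.rpow_def_of_pos hx0, Real.rpow_def_of_pos hx0]
    field_simp
    ring
  rw [MeasureTheory.setIntegral_congr_fun measurableSet_Ioo key]
  have hswap := MeasureTheory.integral_integral_swap
    (f := fun x c => x ^ c) (μ := volume.restrict (Set.Ioo (0:ℝ) 1))
    (ν := volume.restrict (Set.Ioc a b)) ?_
  · rw [hswap]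
    have inner : ∀ c ∈ Set.Ioc a b, (∫ x in Set.Ioo (0:ℝ) 1, x ^ c) = (c+1)⁻¹ := by
      intro c hc
      have hc0 : 0 ≤ c := ha.trans hc.1.le
      rw [← MeasureTheory.integral_Ioc_eq_integral_Ioo, ← intervalIntegral.integral_of_le zero_le_one,
        integral_rpow (Or.inl (by linarith))]
      rw [Real.one_rpow, Real.zero_rpow (by linarith)]
      simp
    rw [MeasureTheory.setIntegral_congr_fun measurableSet_Ioc inner,
      ← intervalIntegral.integral_of_le hab]
    rw [show (fun c : ℝ => (c+1)⁻¹) = fun c : ℝ => (fun u : ℝ => u⁻¹) (c + 1) from rfl]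
    rw [intervalIntegral.integral_comp_add_right (fun u : ℝ => u⁻¹) 1]
    rw [integral_inv (by
      intro h
      rw [Set.mem_uIcc] at h
      rcases h with ⟨h1, h2⟩ | ⟨h1, h2⟩ <;> linarith)]
  · apply MeasureTheory.Integrable.mono' (g := fun _ => (1:ℝ)) (integrable_const 1)
    · have : Measurable fun p : ℝ × ℝ => p.1 ^ p.2 := by measurability
      exact this.aestronglyMeasurable
    · rw [Measure.prod_restrict]
      rw [MeasureTheory.ae_restrict_iff' (measurableSet_Ioo.prod measurableSet_Ioc)]
      filter_upwards with p hp
      obtain ⟨hp1, hp2⟩ := hp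
      have h0 : 0 ≤ p.1 ^ p.2 := Real.rpow_nonneg hp1.1.le _
      simp only [Function.uncurry, Real.norm_eq_abs, abs_of_nonneg h0]
      exact Real.rpow_le_one hp1.1.le hp1.2.le (ha.trans hp2.1.le)


noncomputable def w (k : ℕ) (t : ℝ) : ℝ := (t ^ k - t ^ (k+1)) / (-Real.log t)
noncomputable def H (k : ℕ) (x : ℝ) : ℝ := ∫ t in (0:ℝ)..x, w k t

lemma w_meas (k : ℕ) : Measurable (w k) := by unfold w; measurability

lemma w_nonneg {k : ℕ} {t : ℝ} (ht : t ∈ Set.Ioc (0:ℝ) 1) : 0 ≤ w k t := by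
  rcases eq_or_lt_of_le ht.2 with h1 | h1
  · subst h1; simp [w]
  · have hlog : Real.log t < 0 := Real.log_neg ht.1 h1
    apply div_nonneg _ (by linarith)
    have : t ^ (k+1) ≤ t ^ k := pow_le_pow_of_le_one ht.1.le h1.le (Nat.le_succ k)
    linarith

lemma w_le {k : ℕ} {t : ℝ} (ht : t ∈ Set.Ioc (0:ℝ) 1) : w k t ≤ t ^ k := by
  rcases eq_or_lt_of_le ht.2 with h1 | h1
  · subst h1; simp [w]
  · have hlog : Real.log t < 0 := Real.log_neg ht.1 h1
    have hnum : t ^ k - t ^ (k+1) = t ^ k * (1 - t) := by ring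
    have h2 : 1 - t ≤ -Real.log t := by
      have := Real.log_le_sub_one_of_pos ht.1
      linarith
    rw [w, hnum, div_le_iff₀ (by linarith)]
    have hk : 0 ≤ t ^ k := pow_nonneg ht.1.le k
    nlinarith

lemma w_abs_le_one {k : ℕ} {t : ℝ} (ht : t ∈ Set.Ioc (0:ℝ) 1) : |w k t| ≤ 1 := by
  rw [abs_of_nonneg (w_nonneg ht)]
  exact (w_le ht).trans (pow_le_one₀ ht.1.le ht.2)

lemma w_intInt (k : ℕ) {x : ℝ} (hx0 : 0 ≤ x) (hx1 : x ≤ 1) :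
    IntervalIntegrable (w k) volume 0 x := by
  rw [intervalIntegrable_iff_integrableOn_Ioc_of_le hx0]
  apply Integrable.mono' (integrable_const (1:ℝ)) ((w_meas k).aestronglyMeasurable)
  rw [MeasureTheory.ae_restrict_iff' measurableSet_Ioc]
  filter_upwards with t ht
  exact w_abs_le_one ⟨ht.1, ht.2.trans hx1⟩

lemma H_abs_le {k : ℕ} {x : ℝ} (hx0 : 0 ≤ x) (hx1 : x ≤ 1) : |H k x| ≤ x := by
  have := intervalIntegral.norm_integral_le_of_norm_le_const
    (a := 0) (b := x) (C := 1) (f := w k) ?_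
  · simpa [H, abs_of_nonneg hx0] using this
  · intro t ht
    rw [Set.uIoc_of_le hx0] at ht
    exact w_abs_le_one ⟨ht.1, ht.2.trans hx1⟩

lemma H_nonneg {k : ℕ} {x : ℝ} (hx0 : 0 ≤ x) (hx1 : x ≤ 1) : 0 ≤ H k x := by
  apply intervalIntegral.integral_nonneg hx0
  intro t ht
  rcases eq_or_lt_of_le ht.1 with h | h
  · simp [w, ← h]
  · exact w_nonneg ⟨h, ht.2.trans hx1⟩

lemma H_le {k : ℕ} {x : ℝ} (hx0 : 0 ≤ x) (hx1 : x ≤ 1) :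
    H k x ≤ x ^ (k+1) / (k+1) := by
  have h1 : H k x ≤ ∫ t in (0:ℝ)..x, t ^ k := by
    apply intervalIntegral.integral_mono_on hx0 (w_intInt k hx0 hx1)
      ((continuous_pow k).intervalIntegrable 0 x)
    intro t ht
    rcases eq_or_lt_of_le ht.1 with h | h
    · have hw : w k 0 = 0 := by simp [w]
      rw [← h, hw]
      exact pow_nonneg le_rfl k
    · exact w_le ⟨h, ht.2.trans hx1⟩
  rw [integral_pow] at h1
  simpa using h1

lemma w_integral (k : ℕ) : ∫ t in (0:ℝ)..1, w k t = Real.log ((k+2)/(k+1)) := by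
  have h := frullani (a := (k:ℝ)) (b := (k:ℝ)+1) k.cast_nonneg (by linarith)
  have he : ∀ t : ℝ, (t ^ (k:ℝ) - t ^ ((k:ℝ)+1)) / (-Real.log t) = w k t := by
    intro t
    have h1 : t ^ ((k:ℝ)+1) = t ^ (k+1 : ℕ) := by
      rw [← Real.rpow_natCast t (k+1)]
      push_cast
      ring_nf
    rw [w, Real.rpow_natCast, h1]
  rw [intervalIntegral.integral_congr (fun t _ => he t)] at h
  rw [h]
  ring_nf

lemma H_continuous (k : ℕ) : ContinuousOn (H k) (Set.Icc 0 1) := by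
  have : Set.Icc (0:ℝ) 1 = Set.uIcc 0 1 := by rw [Set.uIcc_of_le zero_le_one]
  rw [this]
  apply intervalIntegral.continuousOn_primitive_interval
  rw [Set.uIcc_of_le zero_le_one]
  apply Integrable.mono' (integrable_const (1:ℝ)) ((w_meas k).aestronglyMeasurable)
  rw [MeasureTheory.ae_restrict_iff' measurableSet_Icc]
  filter_upwards with t ht
  rcases eq_or_lt_of_le ht.1 with h | h
  · have hw : w k 0 = 0 := by simp [w]
    rw [← h, hw]; norm_num
  · exact w_abs_le_one ⟨h, ht.2⟩

lemma H_deriv (k : ℕ) {x : ℝ} (hx : x ∈ Set.Ioo (0:ℝ) 1) :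
    HasDerivAt (H k) (w k x) x := by
  apply intervalIntegral.integral_hasDerivAt_right (w_intInt k hx.1.le hx.2.le)
    ((w_meas k).stronglyMeasurable.stronglyMeasurableAtFilter)
  · apply ContinuousAt.div
    · exact (continuous_pow k).continuousAt.sub (continuous_pow (k+1)).continuousAt
    · exact (Real.continuousAt_log hx.1.ne').neg
    · have := Real.log_neg hx.1 hx.2
      intro h; rw [neg_eq_zero] at h; linarith

lemma parts (k : ℕ) (ε : ℝ) (hε : |ε| ≤ 1) :
    ∫ x in (0:ℝ)..1, (x⁻¹ + ε) * H k x
      = ε * Real.log (((k:ℝ)+2)/((k:ℝ)+1)) + (((k:ℝ)+1)⁻¹ - ((k:ℝ)+2)⁻¹)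
        - ε * Real.log (((k:ℝ)+3)/((k:ℝ)+2)) := by
  have logw : ∀ x ∈ Set.Ioc (0:ℝ) 1, Real.log x * w k x = -(x^k - x^(k+1)) := by
    intro x hx
    rcases eq_or_lt_of_le hx.2 with h1 | h1
    · subst h1; simp [w]
    · have hlog : Real.log x < 0 := Real.log_neg hx.1 h1
      have h0 : Real.log x ≠ 0 := hlog.ne
      rw [w, mul_div_assoc', mul_comm (Real.log x), div_neg, mul_div_assoc,
        div_self h0, mul_one]
  have xw : ∀ x : ℝ, x * w k x = w (k+1) x := by
    intro x
    rw [w, w, ← mul_div_assoc]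
    ring_nf
  -- integrability of the two pieces
  have measA : AEStronglyMeasurable (fun x => (x⁻¹ + ε) * H k x)
      (volume.restrict (Set.Ioc (0:ℝ) 1)) := by
    apply ContinuousOn.aestronglyMeasurable _ measurableSet_Ioc
    apply ContinuousOn.mul
    · exact (continuousOn_id.inv₀ (fun x hx => hx.1.ne')).add continuousOn_const
    · exact (H_continuous k).mono Set.Ioc_subset_Icc_self
  have intA : IntervalIntegrable (fun x => (x⁻¹ + ε) * H k x) volume 0 1 := by
    rw [intervalIntegrable_iff_integrableOn_Ioc_of_le zero_le_one]
    apply Integrable.mono' (integrable_const (2:ℝ)) measA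
    rw [MeasureTheory.ae_restrict_iff' measurableSet_Ioc]
    filter_upwards with x hx
    have h1 : |x⁻¹ + ε| ≤ x⁻¹ + 1 := (abs_add_le _ _).trans
      (by rw [abs_of_nonneg (inv_nonneg.mpr hx.1.le)]; linarith)
    have h2 : |H k x| ≤ x := H_abs_le hx.1.le hx.2
    have h3 : (0:ℝ) < x⁻¹ := inv_pos.mpr hx.1
    calc ‖(x⁻¹ + ε) * H k x‖ = |x⁻¹ + ε| * |H k x| := abs_mul _ _
      _ ≤ (x⁻¹ + 1) * x := mul_le_mul h1 h2 (abs_nonneg _) (by positivity)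
      _ = 1 + x := by field_simp [hx.1.ne']
      _ ≤ 2 := by linarith [hx.2]
  have measB : AEStronglyMeasurable (fun x => (Real.log x + ε * x) * w k x)
      (volume.restrict (Set.Ioc (0:ℝ) 1)) :=
    ((Real.measurable_log.add (measurable_const.mul measurable_id)).mul
      (w_meas k)).aestronglyMeasurable
  have intB : IntervalIntegrable (fun x => (Real.log x + ε * x) * w k x) volume 0 1 := by
    rw [intervalIntegrable_iff_integrableOn_Ioc_of_le zero_le_one]
    apply Integrable.mono' (integrable_const (2:ℝ)) measB
    rw [MeasureTheory.ae_restrict_iff' measurableSet_Ioc]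
    filter_upwards with x hx
    have h1 : |Real.log x * w k x| ≤ 1 := by
      rw [logw x hx, abs_neg, abs_sub_comm]
      have e1 : x ^ (k+1) ≤ x ^ k := pow_le_pow_of_le_one hx.1.le hx.2 (Nat.le_succ k)
      have e2 : 0 ≤ x ^ (k+1) := pow_nonneg hx.1.le _
      have e3 : x ^ k ≤ 1 := pow_le_one₀ hx.1.le hx.2
      rw [abs_of_nonpos (by linarith)]
      linarith
    have h2 : |ε * x * w k x| ≤ 1 := by
      rw [abs_mul, abs_mul]
      have hw1 : |w k x| ≤ 1 := w_abs_le_one (k := k) hx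
      have hax : |x| ≤ 1 := by rw [abs_of_nonneg hx.1.le]; exact hx.2
      have h4 : |ε| * |x| ≤ 1 := by nlinarith [abs_nonneg ε, abs_nonneg x]
      nlinarith [abs_nonneg (w k x), abs_nonneg ε, abs_nonneg x]
    calc ‖(Real.log x + ε * x) * w k x‖
        = |Real.log x * w k x + ε * x * w k x| := by rw [Real.norm_eq_abs]; ring_nf
      _ ≤ |Real.log x * w k x| + |ε * x * w k x| := abs_add_le _ _
      _ ≤ 2 := by linarith
  -- FTC / integration by parts
  have hP0 : (Real.log 0 + ε * 0) * H k 0 = 0 := by simp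
  have hFTC : ∫ x in (0:ℝ)..1,
      ((x⁻¹ + ε) * H k x + (Real.log x + ε * x) * w k x)
      = (Real.log 1 + ε * 1) * H k 1 - (Real.log 0 + ε * 0) * H k 0 := by
    apply intervalIntegral.integral_eq_sub_of_hasDeriv_right_of_le
      (f := fun x => (Real.log x + ε * x) * H k x)
      (f' := fun x => (x⁻¹ + ε) * H k x + (Real.log x + ε * x) * w k x) zero_le_one
    · -- continuity of P on Icc 0 1
      intro x hx
      rcases eq_or_lt_of_le hx.1 with h0 | h0
      · rw [← h0]
        rw [← continuousWithinAt_diff_self, Set.Icc_diff_left]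
        have hP0' : (fun x => (Real.log x + ε * x) * H k x) 0 = 0 := hP0
        unfold ContinuousWithinAt
        rw [hP0']
        apply squeeze_zero_norm'
        · filter_upwards [self_mem_nhdsWithin] with x hx
          have h1 : |Real.log x + ε * x| ≤ -Real.log x + x := by
            have := abs_add_le (Real.log x) (ε * x)
            have hx1 : |Real.log x| = -Real.log x := by
              rcases eq_or_lt_of_le hx.2 with h | h
              · subst h; simp
              · rw [abs_of_neg (Real.log_neg hx.1 h)]
            have hx2 : |ε * x| ≤ x := by
              rw [abs_mul, abs_of_nonneg hx.1.le]
              nlinarith [abs_nonneg ε, hx.1.le]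
            linarith
          have h2 : |H k x| ≤ x := H_abs_le hx.1.le hx.2
          calc ‖(Real.log x + ε * x) * H k x‖ = |Real.log x + ε * x| * |H k x| := abs_mul _ _
            _ ≤ (-Real.log x + x) * x := by
                apply mul_le_mul h1 h2 (abs_nonneg _)
                nlinarith [Real.log_nonpos hx.1.le hx.2, hx.1.le]
            _ = x * x - Real.log x * x := by ring
            _ ≤ x - Real.log x * x := by nlinarith [hx.1.le, hx.2]
        · have hlx : Tendsto (fun x : ℝ => Real.log x * x) (nhdsWithin 0 (Set.Ioi 0)) (nhds 0) := by
            have := tendsto_log_mul_rpow_nhdsGT_zero one_pos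
            simpa [Real.rpow_one] using this
          have hx0 : Tendsto (fun x : ℝ => x) (nhdsWithin 0 (Set.Ioi 0)) (nhds 0) :=
            (continuous_id.tendsto 0).mono_left nhdsWithin_le_nhds
          have := hx0.sub hlx
          rw [sub_zero] at this
          exact this.mono_left (nhdsWithin_mono 0 Set.Ioc_subset_Ioi_self)
      · apply ContinuousWithinAt.mul _ ((H_continuous k) x hx)
        exact ((Real.continuousAt_log h0.ne').add
          ((continuous_const.mul continuous_id).continuousAt)).continuousWithinAt
    · -- derivative
      intro x hx
      have h1 : HasDerivAt (fun x : ℝ => Real.log x + ε * x) (x⁻¹ + ε) x := by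
        apply (Real.hasDerivAt_log hx.1.ne').add
        simpa using (hasDerivAt_id x).const_mul ε
      exact (h1.mul (H_deriv k hx)).hasDerivWithinAt
    · exact intA.add intB
  rw [intervalIntegral.integral_add intA intB, hP0, sub_zero, Real.log_one, zero_add,
    mul_one] at hFTC
  -- compute ∫ B
  have hB : ∫ x in (0:ℝ)..1, (Real.log x + ε * x) * w k x
      = -(((k:ℝ)+1)⁻¹ - ((k:ℝ)+2)⁻¹) + ε * Real.log (((k:ℝ)+3)/((k:ℝ)+2)) := by
    have hsplit : ∀ x ∈ Set.Ioc (0:ℝ) 1, (Real.log x + ε * x) * w k x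
        = -(x^k - x^(k+1)) + ε * w (k+1) x := by
      intro x hx
      rw [← logw x hx, ← xw x]
      ring
    have hae : ∀ᵐ x ∂(volume : Measure ℝ), x ∈ Set.uIoc (0:ℝ) 1 →
        (Real.log x + ε * x) * w k x = -(x^k - x^(k+1)) + ε * w (k+1) x := by
      filter_upwards with x hx
      exact hsplit x (by rwa [Set.uIoc_of_le zero_le_one] at hx)
    rw [intervalIntegral.integral_congr_ae hae]
    rw [intervalIntegral.integral_add, intervalIntegral.integral_neg,
      intervalIntegral.integral_sub ((continuous_pow k).intervalIntegrable 0 1)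
        ((continuous_pow (k+1)).intervalIntegrable 0 1),
      integral_pow, integral_pow, intervalIntegral.integral_const_mul, w_integral (k+1)]
    · push_cast
      ring_nf
    · apply IntervalIntegrable.neg
      exact (((continuous_pow k).sub (continuous_pow (k+1))).intervalIntegrable 0 1)
    · exact ((w_intInt (k+1) zero_le_one le_rfl).const_mul ε)
  rw [hB] at hFTC
  have hH1 : H k 1 = Real.log (((k:ℝ)+2)/((k:ℝ)+1)) := w_integral k
  rw [hH1] at hFTC
  linarith [hFTC]


lemma hasSum_cw {t : ℝ} (ht : t ∈ Set.Ioo (0:ℝ) 1) (c : ℝ) :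
    HasSum (fun m : ℕ => c * w (2*m) t) (c / ((1 + t) * (-Real.log t))) := by
  have hlog : Real.log t < 0 := Real.log_neg ht.1 ht.2
  have h2 : t^2 < 1 := by nlinarith [ht.1, ht.2]
  have hgeo := (hasSum_geometric_of_lt_one (by positivity) h2).mul_left
    (c * (1-t) * (-Real.log t)⁻¹)
  have hfun : (fun m : ℕ => c * (1-t) * (-Real.log t)⁻¹ * (t^2)^m)
      = fun m : ℕ => c * w (2*m) t := by
    funext m
    have hnum : t ^ (2*m) - t ^ (2*m+1) = (t^2)^m * (1-t) := by
      rw [pow_succ, pow_mul]; ring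
    rw [w, hnum, div_eq_mul_inv]; ring
  rw [hfun] at hgeo
  rw [show c / ((1 + t) * (-Real.log t)) = c * (1-t) * (-Real.log t)⁻¹ * (1 - t^2)⁻¹ from ?_]
  · exact hgeo
  have h1t : (1:ℝ) - t ≠ 0 := by nlinarith [ht.2]
  have h1t' : (1:ℝ) + t ≠ 0 := by nlinarith [ht.1]
  have he : (1:ℝ) - t^2 = (1-t)*(1+t) := by ring
  rw [he]
  set L := -Real.log t with hL
  have hl : L ≠ 0 := by rw [hL]; intro h; rw [neg_eq_zero] at h; linarith
  field_simp

lemma hasSum_powsub {x : ℝ} (hx : x ∈ Set.Ioo (0:ℝ) 1) :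
    HasSum (fun m : ℕ => x^(2*m) - x^(2*m+1)) ((1 + x)⁻¹) := by
  have h2 : x^2 < 1 := by nlinarith [hx.1, hx.2]
  have hgeo := (hasSum_geometric_of_lt_one (by positivity) h2).mul_left (1-x)
  have hfun : (fun m : ℕ => (1-x) * (x^2)^m) = fun m : ℕ => x^(2*m) - x^(2*m+1) := by
    funext m
    rw [pow_succ, pow_mul]; ring
  rw [hfun] at hgeo
  rw [show (1 + x)⁻¹ = (1-x) * (1 - x^2)⁻¹ from ?_]
  · exact hgeo
  have h1t : (1:ℝ) - x ≠ 0 := by nlinarith [hx.2]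
  have h1t' : (1:ℝ) + x ≠ 0 := by nlinarith [hx.1]
  have he : (1:ℝ) - x^2 = (1-x)*(1+x) := by ring
  rw [he]
  field_simp

lemma summable_sq_inv : Summable (fun m : ℕ => 2 * (((m:ℝ)+1)^2)⁻¹) := by
  apply Summable.mul_left
  have h := summable_nat_add_iff (f := fun n : ℕ => ((n:ℝ)^2)⁻¹) 1
  have hs : Summable (fun n : ℕ => ((n:ℝ)^2)⁻¹) := by
    have := Real.summable_one_div_nat_pow (p := 2)
    simp only [one_div] at this
    exact this.mpr one_lt_two
  have := h.mpr hs
  simpa using this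

lemma powsub_val (k : ℕ) : ∫ x in Set.Ioo (0:ℝ) 1, (x^k - x^(k+1))
    = ((k:ℝ)+1)⁻¹ - ((k:ℝ)+2)⁻¹ := by
  rw [← MeasureTheory.integral_Ioc_eq_integral_Ioo, ← intervalIntegral.integral_of_le zero_le_one,
    intervalIntegral.integral_sub ((continuous_pow k).intervalIntegrable 0 1)
      ((continuous_pow (k+1)).intervalIntegrable 0 1),
    integral_pow, integral_pow]
  push_cast
  rw [one_pow, one_pow, zero_pow (by omega), zero_pow (by omega)]
  rw [inv_eq_one_div, inv_eq_one_div]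
  ring

lemma S1 : HasSum (fun m : ℕ => (2*(m:ℝ)+1)⁻¹ - (2*(m:ℝ)+2)⁻¹) (Real.log 2) := by
  haveI : IsFiniteMeasure (volume.restrict (Set.Ioo (0:ℝ) 1)) :=
    ⟨by simp [Measure.restrict_apply_univ]⟩
  have hF_int : ∀ m : ℕ, Integrable (fun x : ℝ => x^(2*m) - x^(2*m+1))
      (volume.restrict (Set.Ioo (0:ℝ) 1)) := by
    intro m
    apply Integrable.mono' (integrable_const (1:ℝ))
      ((continuous_pow (2*m)).sub (continuous_pow (2*m+1))).aestronglyMeasurable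
    rw [MeasureTheory.ae_restrict_iff' measurableSet_Ioo]
    filter_upwards with x hx
    have h1 := pow_le_pow_of_le_one hx.1.le hx.2.le (by omega : 2*m ≤ 2*m+1)
    have h2 : x ^ (2*m) ≤ 1 := pow_le_one₀ hx.1.le hx.2.le
    have h3 : 0 ≤ x ^ (2*m+1) := pow_nonneg hx.1.le _
    simp only [Pi.sub_apply]
    rw [Real.norm_eq_abs, abs_of_nonneg (by linarith)]
    linarith
  have hnorm : ∀ m : ℕ, ∫ x in Set.Ioo (0:ℝ) 1, ‖x^(2*m) - x^(2*m+1)‖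
      = (2*(m:ℝ)+1)⁻¹ - (2*(m:ℝ)+2)⁻¹ := by
    intro m
    have hcongr : ∀ x ∈ Set.Ioo (0:ℝ) 1, ‖x^(2*m) - x^(2*m+1)‖ = x^(2*m) - x^(2*m+1) := by
      intro x hx
      have h1 := pow_le_pow_of_le_one hx.1.le hx.2.le (by omega : 2*m ≤ 2*m+1)
      rw [Real.norm_eq_abs, abs_of_nonneg (by linarith)]
    rw [MeasureTheory.setIntegral_congr_fun measurableSet_Ioo hcongr, powsub_val (2*m)]
    push_cast
    ring_nf
  have hF_sum : Summable (fun m : ℕ => ∫ x in Set.Ioo (0:ℝ) 1, ‖x^(2*m) - x^(2*m+1)‖) := by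
    apply Summable.of_nonneg_of_le
      (fun m => integral_nonneg (fun x => norm_nonneg _))
      (fun m => ?_) (summable_sq_inv)
    rw [hnorm m]
    have h1 : (2*(m:ℝ)+1)⁻¹ - (2*(m:ℝ)+2)⁻¹ = ((2*(m:ℝ)+1) * (2*(m:ℝ)+2))⁻¹ := by
      rw [inv_eq_one_div, inv_eq_one_div, inv_eq_one_div]
      rw [div_sub_div _ _ (by positivity) (by positivity)]
      ring_nf
    rw [h1]
    have hpos : (0:ℝ) < ((m:ℝ)+1)^2 := by positivity
    have hle : ((m:ℝ)+1)^2 ≤ (2*(m:ℝ)+1) * (2*(m:ℝ)+2) := by nlinarith [Nat.cast_nonneg (α := ℝ) m]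
    calc ((2*(m:ℝ)+1) * (2*(m:ℝ)+2))⁻¹ ≤ (((m:ℝ)+1)^2)⁻¹ := inv_anti₀ hpos hle
      _ ≤ 2 * (((m:ℝ)+1)^2)⁻¹ := by nlinarith [inv_pos.mpr hpos]
  have hkey := MeasureTheory.hasSum_integral_of_summable_integral_norm hF_int hF_sum
  have htsum : ∫ x in Set.Ioo (0:ℝ) 1, (∑' m : ℕ, (x^(2*m) - x^(2*m+1)))
      = Real.log 2 := by
    have hcongr : ∀ x ∈ Set.Ioo (0:ℝ) 1,
        (∑' m : ℕ, (x^(2*m) - x^(2*m+1))) = (1+x)⁻¹ :=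
      fun x hx => (hasSum_powsub hx).tsum_eq
    rw [MeasureTheory.setIntegral_congr_fun measurableSet_Ioo hcongr,
      ← MeasureTheory.integral_Ioc_eq_integral_Ioo,
      ← intervalIntegral.integral_of_le zero_le_one]
    rw [show (fun x : ℝ => (1+x)⁻¹) = (fun x : ℝ => (fun u : ℝ => u⁻¹) (1+x)) from rfl,
      intervalIntegral.integral_comp_add_left (fun u : ℝ => u⁻¹) 1,
      integral_inv (by
        intro h
        rw [Set.mem_uIcc] at h
        rcases h with ⟨h1, h2⟩ | ⟨h1, h2⟩ <;> linarith)]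
    norm_num
  rw [htsum] at hkey
  have hfin : ∀ m : ℕ, ∫ x in Set.Ioo (0:ℝ) 1, (x^(2*m) - x^(2*m+1))
      = (2*(m:ℝ)+1)⁻¹ - (2*(m:ℝ)+2)⁻¹ := by
    intro m
    rw [powsub_val (2*m)]
    push_cast
    ring_nf
  rw [show (fun m : ℕ => (2*(m:ℝ)+1)⁻¹ - (2*(m:ℝ)+2)⁻¹)
    = (fun m : ℕ => ∫ x in Set.Ioo (0:ℝ) 1, (x^(2*m) - x^(2*m+1))) from
    funext (fun m => (hfin m).symm)]
  exact hkey

lemma S2 : HasSum (fun m : ℕ => Real.log ((2*(m:ℝ)+2)/(2*(m:ℝ)+1))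
    - Real.log ((2*(m:ℝ)+3)/(2*(m:ℝ)+2))) (Real.log (Real.pi/2)) := by
  rw [hasSum_iff_tendsto_nat_of_nonneg]
  · have key : ∀ n : ℕ, (∑ m ∈ Finset.range n, (Real.log ((2*(m:ℝ)+2)/(2*(m:ℝ)+1))
        - Real.log ((2*(m:ℝ)+3)/(2*(m:ℝ)+2))))
        = Real.log (∏ i ∈ Finset.range n,
            ((2:ℝ) * i + 2) / (2 * i + 1) * ((2 * i + 2) / (2 * i + 3))) := by
      intro n
      rw [Real.log_prod (fun i _ => by positivity)]
      apply Finset.sum_congr rfl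
      intro i _
      rw [Real.log_mul (by positivity) (by positivity),
        Real.log_div (by positivity) (by positivity),
        Real.log_div (by positivity) (by positivity),
        Real.log_div (by positivity) (by positivity)]
      ring
    have hcont := (Real.continuousAt_log (x := Real.pi/2) (by positivity)).tendsto
    have hW := hcont.comp Real.tendsto_prod_pi_div_two
    rw [show (fun n : ℕ => ∑ m ∈ Finset.range n, (Real.log ((2*(m:ℝ)+2)/(2*(m:ℝ)+1))
      - Real.log ((2*(m:ℝ)+3)/(2*(m:ℝ)+2)))) = (Real.log ∘ fun k => ∏ i ∈ Finset.range k,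
        ((2:ℝ) * i + 2) / (2 * i + 1) * ((2 * i + 2) / (2 * i + 3))) from
      funext (fun n => key n)]
    exact hW
  · intro m
    have h1 : (2*(m:ℝ)+3)/(2*(m:ℝ)+2) ≤ (2*(m:ℝ)+2)/(2*(m:ℝ)+1) := by
      rw [div_le_div_iff₀ (by positivity) (by positivity)]
      nlinarith [Nat.cast_nonneg (α := ℝ) m]
    have h2 : (0:ℝ) < (2*(m:ℝ)+3)/(2*(m:ℝ)+2) := by positivity
    have := Real.log_le_log h2 h1
    linarith

lemma Tm_eval (ε : ℝ) (hε : |ε| ≤ 1) (m : ℕ) :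
    ∫ x in Set.Ioo (0:ℝ) 1, (1 + ε*x) * (x⁻¹ * H (2*m) x)
      = ((2*(m:ℝ)+1)⁻¹ - (2*(m:ℝ)+2)⁻¹)
        + ε * (Real.log ((2*(m:ℝ)+2)/(2*(m:ℝ)+1)) - Real.log ((2*(m:ℝ)+3)/(2*(m:ℝ)+2))) := by
  have hcongr : ∀ x ∈ Set.Ioo (0:ℝ) 1,
      (1 + ε*x) * (x⁻¹ * H (2*m) x) = (x⁻¹ + ε) * H (2*m) x := by
    intro x hx
    field_simp [hx.1.ne']
  rw [MeasureTheory.setIntegral_congr_fun measurableSet_Ioo hcongr,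
    ← MeasureTheory.integral_Ioc_eq_integral_Ioo, ← intervalIntegral.integral_of_le zero_le_one,
    parts (2*m) ε hε]
  push_cast
  ring

lemma habs2 (ε x : ℝ) (hε : |ε| ≤ 1) (hx0 : 0 ≤ x) (hx1 : x ≤ 1) : |1 + ε*x| ≤ 2 := by
  have h1 := abs_add_le (1:ℝ) (ε*x)
  rw [abs_one, abs_mul, abs_of_nonneg hx0] at h1
  nlinarith [abs_nonneg ε]

lemma inner_eval (ε : ℝ) (hε : |ε| ≤ 1) {x : ℝ} (hx : x ∈ Set.Ioo (0:ℝ) 1) :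
    (∫ y in (0:ℝ)..1, (1 + ε*x) / ((1 + x*y) * (-Real.log (x*y))))
      = ∑' m : ℕ, (1 + ε*x) * (x⁻¹ * H (2*m) x) := by
  haveI : IsFiniteMeasure (volume.restrict (Set.Ioc (0:ℝ) 1)) :=
    ⟨by simp [Measure.restrict_apply_univ]⟩
  have hxy_mem : ∀ y ∈ Set.Ioc (0:ℝ) 1, x*y ∈ Set.Ioc (0:ℝ) 1 := by
    intro y hy
    exact ⟨mul_pos hx.1 hy.1, by nlinarith [hy.2, hx.1.le, hx.2.le]⟩
  have hxy_mem' : ∀ y ∈ Set.Ioc (0:ℝ) 1, x*y ∈ Set.Ioo (0:ℝ) 1 := by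
    intro y hy
    exact ⟨mul_pos hx.1 hy.1, lt_of_le_of_lt (by nlinarith [hy.2, hx.1.le] : x*y ≤ x) hx.2⟩
  rw [intervalIntegral.integral_of_le zero_le_one]
  have hid : ∀ y ∈ Set.Ioc (0:ℝ) 1, (1 + ε*x) / ((1 + x*y) * (-Real.log (x*y)))
      = ∑' m : ℕ, (1 + ε*x) * w (2*m) (x*y) := by
    intro y hy
    exact ((hasSum_cw (hxy_mem' y hy) (1+ε*x)).tsum_eq).symm
  rw [MeasureTheory.setIntegral_congr_fun measurableSet_Ioc hid]
  have hF_int : ∀ m : ℕ, Integrable (fun y : ℝ => (1 + ε*x) * w (2*m) (x*y))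
      (volume.restrict (Set.Ioc (0:ℝ) 1)) := by
    intro m
    apply Integrable.mono' (integrable_const (2:ℝ))
    · exact (measurable_const.mul
        ((w_meas (2*m)).comp (measurable_id.const_mul x))).aestronglyMeasurable
    · rw [MeasureTheory.ae_restrict_iff' measurableSet_Ioc]
      filter_upwards with y hy
      have h1 := w_abs_le_one (k := 2*m) (hxy_mem y hy)
      have h2 := habs2 ε x hε hx.1.le hx.2.le
      rw [Real.norm_eq_abs, abs_mul]
      nlinarith [abs_nonneg (1+ε*x), abs_nonneg (w (2*m) (x*y))]
  have hF_sum : Summable (fun m : ℕ =>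
      ∫ y in Set.Ioc (0:ℝ) 1, ‖(1 + ε*x) * w (2*m) (x*y)‖) := by
    apply Summable.of_nonneg_of_le (fun m => integral_nonneg fun y => norm_nonneg _)
      (fun m => ?_)
      ((summable_geometric_of_lt_one (by positivity : (0:ℝ) ≤ x^2)
        (by nlinarith [hx.1, hx.2] : x^2 < 1)).mul_left 2)
    have hb : ∀ y ∈ Set.Ioc (0:ℝ) 1, ‖(1 + ε*x) * w (2*m) (x*y)‖ ≤ 2 * (x^2)^m := by
      intro y hy
      have hxy := hxy_mem y hy
      have h1 : |w (2*m) (x*y)| ≤ (x*y)^(2*m) := by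
        rw [abs_of_nonneg (w_nonneg hxy)]; exact w_le hxy
      have h2 : (x*y)^(2*m) ≤ x^(2*m) := by
        apply pow_le_pow_left₀ (mul_pos hx.1 hy.1).le _ _
        nlinarith [hy.2, hx.1.le]
      have h3 := habs2 ε x hε hx.1.le hx.2.le
      rw [Real.norm_eq_abs, abs_mul]
      calc |1+ε*x| * |w (2*m) (x*y)| ≤ 2 * x^(2*m) := by
            nlinarith [abs_nonneg (w (2*m) (x*y)),
              pow_nonneg (mul_pos hx.1 hy.1).le (2*m), abs_nonneg (1+ε*x)]
        _ = 2 * (x^2)^m := by rw [pow_mul]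
    calc ∫ y in Set.Ioc (0:ℝ) 1, ‖(1 + ε*x) * w (2*m) (x*y)‖
        ≤ ∫ _y in Set.Ioc (0:ℝ) 1, 2 * (x^2)^m :=
          MeasureTheory.setIntegral_mono_on ((hF_int m).norm)
            (integrable_const _) measurableSet_Ioc hb
      _ = 2 * (x^2)^m := by rw [MeasureTheory.setIntegral_const]; simp
  rw [← MeasureTheory.integral_tsum_of_summable_integral_norm hF_int hF_sum]
  congr 1
  funext m
  rw [MeasureTheory.integral_const_mul]
  congr 1
  rw [← intervalIntegral.integral_of_le zero_le_one,
    intervalIntegral.integral_comp_mul_left (f := w (2*m)) hx.1.ne']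
  rw [mul_zero, mul_one, smul_eq_mul]
  rfl

lemma main_eps (ε : ℝ) (hε : |ε| ≤ 1) :
    (∫ x in (0:ℝ)..1, ∫ y in (0:ℝ)..1, (1 + ε*x) / ((1 + x*y) * (-Real.log (x*y))))
      = Real.log 2 + ε * Real.log (Real.pi/2) := by
  rw [intervalIntegral.integral_of_le zero_le_one, MeasureTheory.integral_Ioc_eq_integral_Ioo,
    MeasureTheory.setIntegral_congr_fun measurableSet_Ioo
      (fun x hx => inner_eval ε hε hx)]
  haveI : IsFiniteMeasure (volume.restrict (Set.Ioo (0:ℝ) 1)) :=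
    ⟨by simp [Measure.restrict_apply_univ]⟩
  have hG_int : ∀ m : ℕ, Integrable (fun x : ℝ => (1 + ε*x) * (x⁻¹ * H (2*m) x))
      (volume.restrict (Set.Ioo (0:ℝ) 1)) := by
    intro m
    apply Integrable.mono' (integrable_const (2:ℝ))
    · apply ContinuousOn.aestronglyMeasurable _ measurableSet_Ioo
      apply ContinuousOn.mul
      · exact (continuous_const.add (continuous_const.mul continuous_id)).continuousOn
      · exact (continuousOn_id.inv₀ fun x hx => hx.1.ne').mul
          ((H_continuous (2*m)).mono Set.Ioo_subset_Icc_self)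
    · rw [MeasureTheory.ae_restrict_iff' measurableSet_Ioo]
      filter_upwards with x hx
      have h1 := habs2 ε x hε hx.1.le hx.2.le
      have h2 : |x⁻¹ * H (2*m) x| ≤ 1 := by
        rw [abs_mul, abs_of_nonneg (inv_nonneg.mpr hx.1.le)]
        have h3 := H_abs_le (k := 2*m) hx.1.le hx.2.le
        have h4 := inv_pos.mpr hx.1
        calc x⁻¹ * |H (2*m) x| ≤ x⁻¹ * x := by nlinarith
          _ = 1 := inv_mul_cancel₀ hx.1.ne'
      rw [Real.norm_eq_abs, abs_mul]
      nlinarith [abs_nonneg (1+ε*x), abs_nonneg (x⁻¹ * H (2*m) x)]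
  have hpow : ∀ m : ℕ, ∫ x in Set.Ioo (0:ℝ) 1, x^(2*m) = (2*(m:ℝ)+1)⁻¹ := by
    intro m
    rw [← MeasureTheory.integral_Ioc_eq_integral_Ioo,
      ← intervalIntegral.integral_of_le zero_le_one, integral_pow]
    rw [one_pow, zero_pow (by omega)]
    push_cast
    ring_nf
  have hG_sum : Summable (fun m : ℕ =>
      ∫ x in Set.Ioo (0:ℝ) 1, ‖(1 + ε*x) * (x⁻¹ * H (2*m) x)‖) := by
    apply Summable.of_nonneg_of_le (fun m => integral_nonneg fun x => norm_nonneg _)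
      (fun m => ?_) summable_sq_inv
    have hb : ∀ x ∈ Set.Ioo (0:ℝ) 1, ‖(1 + ε*x) * (x⁻¹ * H (2*m) x)‖
        ≤ 2 * ((m:ℝ)+1)⁻¹ * x^(2*m) := by
      intro x hx
      have h1 := habs2 ε x hε hx.1.le hx.2.le
      have hH1 := H_le (k := 2*m) hx.1.le hx.2.le
      have hH0 := H_nonneg (k := 2*m) hx.1.le hx.2.le
      have hinv := inv_pos.mpr hx.1
      have hx2 : x⁻¹ * (x^(2*m+1)/(2*(m:ℝ)+1)) = x^(2*m)/(2*(m:ℝ)+1) := by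
        rw [pow_succ, mul_comm (x^(2*m)) x, mul_div_assoc, ← mul_assoc,
          inv_mul_cancel₀ hx.1.ne', one_mul]
      have hxp : (0:ℝ) ≤ x^(2*m) := pow_nonneg hx.1.le _
      have hstep : x⁻¹ * H (2*m) x ≤ x^(2*m)/(2*(m:ℝ)+1) := by
        rw [← hx2]
        have : (↑(2*m)+1 : ℝ) = 2*(m:ℝ)+1 := by push_cast; ring
        rw [this] at hH1
        nlinarith
      have hmono : x^(2*m)/(2*(m:ℝ)+1) ≤ ((m:ℝ)+1)⁻¹ * x^(2*m) := by
        rw [div_eq_inv_mul]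
        have : ((2*(m:ℝ)+1))⁻¹ ≤ ((m:ℝ)+1)⁻¹ :=
          inv_anti₀ (by positivity) (by nlinarith [Nat.cast_nonneg (α := ℝ) m])
        nlinarith
      rw [Real.norm_eq_abs, abs_mul]
      have h2 : |x⁻¹ * H (2*m) x| = x⁻¹ * H (2*m) x := by
        rw [abs_of_nonneg (mul_nonneg (inv_nonneg.mpr hx.1.le) hH0)]
      rw [h2]
      have hnn : 0 ≤ x⁻¹ * H (2*m) x := mul_nonneg (inv_nonneg.mpr hx.1.le) hH0
      calc |1+ε*x| * (x⁻¹ * H (2*m) x) ≤ 2 * (x⁻¹ * H (2*m) x) := by nlinarith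
        _ ≤ 2 * (((m:ℝ)+1)⁻¹ * x^(2*m)) := by nlinarith [hstep.trans hmono]
        _ = 2 * ((m:ℝ)+1)⁻¹ * x^(2*m) := by ring
    have hbint : Integrable (fun x : ℝ => 2 * ((m:ℝ)+1)⁻¹ * x^(2*m))
        (volume.restrict (Set.Ioo (0:ℝ) 1)) := by
      apply Integrable.mono' (integrable_const (2 * ((m:ℝ)+1)⁻¹))
        (continuous_const.mul (continuous_pow (2*m))).aestronglyMeasurable
      rw [MeasureTheory.ae_restrict_iff' measurableSet_Ioo]
      filter_upwards with x hx
      have h2 : x ^ (2*m) ≤ 1 := pow_le_one₀ hx.1.le hx.2.le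
      have h3 : (0:ℝ) ≤ x^(2*m) := pow_nonneg hx.1.le _
      have h4 : (0:ℝ) ≤ ((m:ℝ)+1)⁻¹ := by positivity
      simp only [Pi.mul_apply]
      rw [Real.norm_eq_abs, abs_of_nonneg (by positivity)]
      nlinarith
    calc ∫ x in Set.Ioo (0:ℝ) 1, ‖(1 + ε*x) * (x⁻¹ * H (2*m) x)‖
        ≤ ∫ x in Set.Ioo (0:ℝ) 1, 2 * ((m:ℝ)+1)⁻¹ * x^(2*m) :=
          MeasureTheory.setIntegral_mono_on ((hG_int m).norm) hbint measurableSet_Ioo hb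
      _ = 2 * ((m:ℝ)+1)⁻¹ * (2*(m:ℝ)+1)⁻¹ := by
          rw [MeasureTheory.integral_const_mul, hpow m]
      _ ≤ 2 * (((m:ℝ)+1)^2)⁻¹ := by
          have h5 : ((2*(m:ℝ)+1))⁻¹ ≤ ((m:ℝ)+1)⁻¹ :=
            inv_anti₀ (by positivity) (by nlinarith [Nat.cast_nonneg (α := ℝ) m])
          have h6 : (0:ℝ) ≤ ((m:ℝ)+1)⁻¹ := by positivity
          have h7 : (((m:ℝ)+1)^2)⁻¹ = ((m:ℝ)+1)⁻¹ * ((m:ℝ)+1)⁻¹ := by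
            rw [sq, mul_inv]
          rw [h7]
          nlinarith
  rw [← MeasureTheory.integral_tsum_of_summable_integral_norm hG_int hG_sum]
  rw [show (fun m : ℕ => ∫ x in Set.Ioo (0:ℝ) 1, (1 + ε*x) * (x⁻¹ * H (2*m) x))
    = (fun m : ℕ => ((2*(m:ℝ)+1)⁻¹ - (2*(m:ℝ)+2)⁻¹)
        + ε * (Real.log ((2*(m:ℝ)+2)/(2*(m:ℝ)+1)) - Real.log ((2*(m:ℝ)+3)/(2*(m:ℝ)+2))))
    from funext (fun m => Tm_eval ε hε m)]
  exact (S1.add (S2.mul_left ε)).tsum_eq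

theorem double_integrals_log_pi_and_log_four_div_pi :
    (∫ x in (0:ℝ)..1, ∫ y in (0:ℝ)..1,
        (1 + x) / ((1 + x * y) * (-Real.log (x * y)))) = Real.log Real.pi ∧
      (∫ x in (0:ℝ)..1, ∫ y in (0:ℝ)..1,
          (1 - x) / ((1 + x * y) * (-Real.log (x * y)))) = Real.log (4 / Real.pi) := by
  have hpi := Real.pi_pos
  constructor
  · have h := main_eps 1 (by norm_num)
    rw [show (∫ x in (0:ℝ)..1, ∫ y in (0:ℝ)..1,
        (1 + x) / ((1 + x * y) * (-Real.log (x * y))))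
      = (∫ x in (0:ℝ)..1, ∫ y in (0:ℝ)..1,
        (1 + (1:ℝ)*x) / ((1 + x * y) * (-Real.log (x * y)))) by norm_num]
    rw [h, one_mul, ← Real.log_mul (by norm_num) (by positivity)]
    congr 1
    ring
  · have h := main_eps (-1) (by norm_num)
    rw [show (∫ x in (0:ℝ)..1, ∫ y in (0:ℝ)..1,
        (1 - x) / ((1 + x * y) * (-Real.log (x * y))))
      = (∫ x in (0:ℝ)..1, ∫ y in (0:ℝ)..1,
        (1 + (-1:ℝ)*x) / ((1 + x * y) * (-Real.log (x * y)))) by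
      simp only [neg_one_mul, ← sub_eq_add_neg]]
    rw [h]
    rw [Real.log_div (by norm_num) hpi.ne', Real.log_div hpi.ne' (by norm_num)]
    have h4 : Real.log 4 = 2 * Real.log 2 := by
      rw [show (4:ℝ) = 2^2 by norm_num, Real.log_pow]
      push_cast; ring
    rw [h4]
    ring
end

section
/- For |z| < 1, ∑_{n=1}^∞ (H_{n,2}/n) z^n + 2 ∑_{n=1}^∞ (H_n/n²) z^n = 3 Li₃(z) − Li₂(z) ln(1−z), where H_n = ∑_{j=1}^n 1/j, H_{n,2} = ∑_{j=1}^n 1/j², and Li_m(z) = ∑_{k=1}^∞ z^k/k^m. -/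
lemma aux_frac0 (x y N : ℂ) (hx : x ≠ 0) (hy : y ≠ 0) (hN : N ≠ 0) (hxy : x + y = N) :
    (1:ℂ)/(x^2*y) = (1/N)*(1/x^2) + (1/N^2)*(1/x) + (1/N^2)*(1/y) := by
  field_simp
  linear_combination (-(N+x)) * hxy

lemma hasSum_b {z : ℂ} (hz : ‖z‖ < 1) :
    HasSum (fun m : ℕ => z^(m+1)/((m:ℂ)+1)) (-Complex.log (1-z)) := by
  have h0 := Complex.hasSum_taylorSeries_neg_log hz
  have h1 := (hasSum_nat_add_iff' (f := fun n : ℕ => z ^ n / (n:ℂ)) 1).mpr h0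
  simp only [Finset.range_one, Finset.sum_singleton, Nat.cast_zero, pow_zero, div_zero,
    sub_zero] at h1
  have he : (fun m : ℕ => z^(m+1)/((m:ℂ)+1)) = fun n : ℕ => z^(n+1)/((n+1 : ℕ):ℂ) := by
    funext m; push_cast; ring
  rw [he]; exact h1

lemma norm_inv_succ_le_one (j : ℕ) : ‖(1:ℂ)/((j:ℂ)+1)‖ ≤ 1 := by
  rw [norm_div, norm_one, show ((j:ℂ)+1) = ((j+1:ℕ):ℂ) by push_cast; ring,
    Complex.norm_natCast, div_le_one (by positivity)]
  exact_mod_cast Nat.succ_le_succ (Nat.zero_le j)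

lemma norm_inv_succ_sq_le_one (j : ℕ) : ‖(1:ℂ)/((j:ℂ)+1)^2‖ ≤ 1 := by
  rw [← one_div_pow, norm_pow]
  exact pow_le_one₀ (norm_nonneg _) (norm_inv_succ_le_one j)

lemma norm_inv_succ_cube_le_one (j : ℕ) : ‖(1:ℂ)/((j:ℂ)+1)^3‖ ≤ 1 := by
  rw [← one_div_pow, norm_pow]
  exact pow_le_one₀ (norm_nonneg _) (norm_inv_succ_le_one j)

lemma norm_succ_eq (n : ℕ) : ‖(n:ℂ)+1‖ = (n:ℝ)+1 := by
  rw [show ((n:ℂ)+1) = ((n+1:ℕ):ℂ) by push_cast; ring, Complex.norm_natCast]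
  push_cast; ring

lemma summable_norm_aux {z : ℂ} (hz : ‖z‖ < 1) {c : ℕ → ℂ} (hc : ∀ n, ‖c n‖ ≤ 1) :
    Summable (fun n => ‖c n * z^(n+1)‖) := by
  refine Summable.of_nonneg_of_le (fun n => norm_nonneg _) (fun n => ?_)
    (summable_geometric_of_lt_one (norm_nonneg z) hz)
  rw [norm_mul, norm_pow]
  calc ‖c n‖ * ‖z‖^(n+1) ≤ 1 * ‖z‖^n :=
        mul_le_mul (hc n) (pow_le_pow_of_le_one (norm_nonneg z) hz.le (Nat.le_succ n))
          (by positivity) (by norm_num)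
    _ = ‖z‖^n := one_mul _

lemma bound1 (n : ℕ) :
    ‖(∑ j ∈ Finset.range (n+1), (1:ℂ)/((j:ℂ)+1)^2)/((n:ℂ)+1)‖ ≤ 1 := by
  rw [norm_div, div_le_one (by rw [norm_succ_eq]; positivity)]
  calc ‖∑ j ∈ Finset.range (n+1), (1:ℂ)/((j:ℂ)+1)^2‖
      ≤ ∑ j ∈ Finset.range (n+1), ‖(1:ℂ)/((j:ℂ)+1)^2‖ := norm_sum_le _ _
    _ ≤ ∑ _j ∈ Finset.range (n+1), (1:ℝ) :=
        Finset.sum_le_sum (fun j _ => norm_inv_succ_sq_le_one j)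
    _ = (n:ℝ)+1 := by simp
    _ = ‖(n:ℂ)+1‖ := (norm_succ_eq n).symm

lemma bound2 (n : ℕ) :
    ‖(∑ j ∈ Finset.range (n+1), (1:ℂ)/((j:ℂ)+1))/((n:ℂ)+1)^2‖ ≤ 1 := by
  rw [norm_div, norm_pow, div_le_one (by rw [norm_succ_eq]; positivity)]
  calc ‖∑ j ∈ Finset.range (n+1), (1:ℂ)/((j:ℂ)+1)‖
      ≤ ∑ j ∈ Finset.range (n+1), ‖(1:ℂ)/((j:ℂ)+1)‖ := norm_sum_le _ _
    _ ≤ ∑ _j ∈ Finset.range (n+1), (1:ℝ) :=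
        Finset.sum_le_sum (fun j _ => norm_inv_succ_le_one j)
    _ = (n:ℝ)+1 := by simp
    _ ≤ ((n:ℝ)+1)^2 := by nlinarith [Nat.cast_nonneg (α := ℝ) n]
    _ = ‖(n:ℂ)+1‖^2 := by rw [norm_succ_eq]

lemma key (z : ℂ) (n : ℕ) :
    ∑ k ∈ Finset.range (n+1),
      (z^(k+1)/((k:ℂ)+1)^2) * (z^((n-k)+1)/(((n-k:ℕ):ℂ)+1))
    = ((∑ j ∈ Finset.range (n+1), (1:ℂ)/((j:ℂ)+1)^2) / ((n:ℂ)+2)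
      + 2 * (∑ j ∈ Finset.range (n+1), (1:ℂ)/((j:ℂ)+1)) / ((n:ℂ)+2)^2) * z^(n+2) := by
  have hN : ((n:ℂ)+2) ≠ 0 := by
    rw [show ((n:ℂ)+2) = ((n+2:ℕ):ℂ) by push_cast; ring]
    exact Nat.cast_ne_zero.mpr (by omega)
  have h1 : ∑ k ∈ Finset.range (n+1),
      (z^(k+1)/((k:ℂ)+1)^2) * (z^((n-k)+1)/(((n-k:ℕ):ℂ)+1))
      = ∑ k ∈ Finset.range (n+1), z^(n+2) *
        ((1/((n:ℂ)+2))*(1/((k:ℂ)+1)^2) + (1/((n:ℂ)+2)^2)*(1/((k:ℂ)+1))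
          + (1/((n:ℂ)+2)^2)*(1/(((n-k:ℕ):ℂ)+1))) := by
    refine Finset.sum_congr rfl (fun k hk => ?_)
    have hk' : k ≤ n := Finset.mem_range_succ_iff.mp hk
    have hc : ((n - k : ℕ) : ℂ) = (n:ℂ) - (k:ℂ) := Nat.cast_sub hk'
    have hpow : z^(k+1) * z^((n-k)+1) = z^(n+2) := by rw [← pow_add]; congr 1; omega
    have hfrac := aux_frac0 ((k:ℂ)+1) (((n-k:ℕ):ℂ)+1) ((n:ℂ)+2)
      (Nat.cast_add_one_ne_zero k) (Nat.cast_add_one_ne_zero (n-k)) hN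
      (by rw [hc]; ring)
    rw [div_mul_div_comm, hpow, div_eq_mul_one_div, hfrac]
  rw [h1, ← Finset.mul_sum]
  have hrefl : ∑ k ∈ Finset.range (n+1), (1:ℂ)/(((n-k:ℕ):ℂ)+1)
      = ∑ j ∈ Finset.range (n+1), (1:ℂ)/((j:ℂ)+1) := by
    have := Finset.sum_range_reflect (fun j => (1:ℂ)/((j:ℂ)+1)) (n+1)
    simpa using this
  simp only [Finset.sum_add_distrib, ← Finset.mul_sum, hrefl]
  ring

lemma termwise (z : ℂ) (n : ℕ) :
    (∑ j ∈ Finset.range (n+1), (1:ℂ)/((j:ℂ)+1)^2)/((n:ℂ)+1) * z^(n+1)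
      + 2 * ((∑ j ∈ Finset.range (n+1), (1:ℂ)/((j:ℂ)+1))/((n:ℂ)+1)^2 * z^(n+1))
    = 3 * (z^(n+1)/((n:ℂ)+1)^3) +
      ((∑ j ∈ Finset.range n, (1:ℂ)/((j:ℂ)+1)^2)/((n:ℂ)+1)
        + 2*(∑ j ∈ Finset.range n, (1:ℂ)/((j:ℂ)+1))/((n:ℂ)+1)^2) * z^(n+1) := by
  have hn1 : ((n:ℂ)+1) ≠ 0 := Nat.cast_add_one_ne_zero n
  rw [Finset.sum_range_succ, Finset.sum_range_succ]
  field_simp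
  ring

theorem harmonic_polylog_identity (z : ℂ) (hz : ‖z‖ < 1) :
    (∑' n : ℕ, (∑ j ∈ Finset.range (n + 1), (1 : ℂ) / ((j : ℂ) + 1) ^ 2) / ((n : ℂ) + 1)
        * z ^ (n + 1)) +
      2 * ∑' n : ℕ, (∑ j ∈ Finset.range (n + 1), (1 : ℂ) / ((j : ℂ) + 1)) / ((n : ℂ) + 1) ^ 2
        * z ^ (n + 1) =
    3 * (∑' k : ℕ, z ^ (k + 1) / ((k : ℂ) + 1) ^ 3) -
      (∑' k : ℕ, z ^ (k + 1) / ((k : ℂ) + 1) ^ 2) * Complex.log (1 - z) := by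
  have hz' : ‖z‖ < 1 := hz
  -- norm-summability of the polylog building blocks
  have hna : Summable (fun k : ℕ => ‖z^(k+1)/((k:ℂ)+1)^2‖) := by
    refine (summable_norm_aux hz' (c := fun k => (1:ℂ)/((k:ℂ)+1)^2)
      (fun k => norm_inv_succ_sq_le_one k)).congr (fun k => ?_)
    congr 1; ring
  have hnb : Summable (fun m : ℕ => ‖z^(m+1)/((m:ℂ)+1)‖) := by
    refine (summable_norm_aux hz' (c := fun m => (1:ℂ)/((m:ℂ)+1))
      (fun m => norm_inv_succ_le_one m)).congr (fun m => ?_)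
    congr 1; ring
  have hs3 : Summable (fun k : ℕ => z^(k+1)/((k:ℂ)+1)^3) := by
    refine (summable_norm_aux hz' (c := fun k => (1:ℂ)/((k:ℂ)+1)^3)
      (fun k => norm_inv_succ_cube_le_one k)).of_norm.congr (fun k => ?_)
    ring
  have ht1 : Summable (fun n : ℕ =>
      (∑ j ∈ Finset.range (n+1), (1:ℂ)/((j:ℂ)+1)^2)/((n:ℂ)+1) * z^(n+1)) :=
    (summable_norm_aux hz' (fun n => bound1 n)).of_norm
  have ht2 : Summable (fun n : ℕ =>
      (∑ j ∈ Finset.range (n+1), (1:ℂ)/((j:ℂ)+1))/((n:ℂ)+1)^2 * z^(n+1)) :=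
    (summable_norm_aux hz' (fun n => bound2 n)).of_norm
  -- Cauchy product: Li₂ · (−log(1−z))
  have hb := hasSum_b hz'
  have hP : HasSum (fun n : ℕ => ∑ k ∈ Finset.range (n+1),
      (z^(k+1)/((k:ℂ)+1)^2) * (z^((n-k)+1)/(((n-k:ℕ):ℂ)+1)))
      ((∑' k : ℕ, z^(k+1)/((k:ℂ)+1)^2) * (-Complex.log (1-z))) := by
    have h := hasSum_sum_range_mul_of_summable_norm hna hnb
    rwa [hb.tsum_eq] at h
  -- shift: the series g over all naturals
  set g : ℕ → ℂ := fun n => ((∑ j ∈ Finset.range n, (1:ℂ)/((j:ℂ)+1)^2)/((n:ℂ)+1)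
      + 2*(∑ j ∈ Finset.range n, (1:ℂ)/((j:ℂ)+1))/((n:ℂ)+1)^2) * z^(n+1) with hg_def
  have hgshift : (fun n : ℕ => g (n+1)) = fun n : ℕ => ∑ k ∈ Finset.range (n+1),
      (z^(k+1)/((k:ℂ)+1)^2) * (z^((n-k)+1)/(((n-k:ℕ):ℂ)+1)) := by
    funext n
    rw [key z n, hg_def]
    push_cast
    rw [show ((n:ℂ)+1+1) = (n:ℂ)+2 by ring]
  have hg : HasSum g ((∑' k : ℕ, z^(k+1)/((k:ℂ)+1)^2) * (-Complex.log (1-z))) := by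
    have h2 : HasSum (fun n : ℕ => g (n+1))
        ((∑' k : ℕ, z^(k+1)/((k:ℂ)+1)^2) * (-Complex.log (1-z))) := by
      rw [hgshift]; exact hP
    have h3 := (hasSum_nat_add_iff (f := g) 1).mp h2
    simpa [hg_def] using h3
  -- combine with the 3·Li₃ part
  have hfull : HasSum (fun n : ℕ =>
      (∑ j ∈ Finset.range (n+1), (1:ℂ)/((j:ℂ)+1)^2)/((n:ℂ)+1) * z^(n+1)
        + 2 * ((∑ j ∈ Finset.range (n+1), (1:ℂ)/((j:ℂ)+1))/((n:ℂ)+1)^2 * z^(n+1)))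
      (3 * (∑' k : ℕ, z^(k+1)/((k:ℂ)+1)^3)
        + (∑' k : ℕ, z^(k+1)/((k:ℂ)+1)^2) * (-Complex.log (1-z))) := by
    have h := (hs3.hasSum.mul_left 3).add hg
    have he : (fun n : ℕ => 3 * (z^(n+1)/((n:ℂ)+1)^3) + g n) = fun n : ℕ =>
        (∑ j ∈ Finset.range (n+1), (1:ℂ)/((j:ℂ)+1)^2)/((n:ℂ)+1) * z^(n+1)
          + 2 * ((∑ j ∈ Finset.range (n+1), (1:ℂ)/((j:ℂ)+1))/((n:ℂ)+1)^2 * z^(n+1)) := by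
      funext n; rw [hg_def, termwise z n]
    rwa [he] at h
  calc (∑' n : ℕ, (∑ j ∈ Finset.range (n + 1), (1 : ℂ) / ((j : ℂ) + 1) ^ 2) / ((n : ℂ) + 1)
        * z ^ (n + 1)) +
      2 * ∑' n : ℕ, (∑ j ∈ Finset.range (n + 1), (1 : ℂ) / ((j : ℂ) + 1)) / ((n : ℂ) + 1) ^ 2
        * z ^ (n + 1)
      = ∑' n : ℕ, ((∑ j ∈ Finset.range (n + 1), (1 : ℂ) / ((j : ℂ) + 1) ^ 2) / ((n : ℂ) + 1)
          * z ^ (n + 1)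
        + 2 * ((∑ j ∈ Finset.range (n + 1), (1 : ℂ) / ((j : ℂ) + 1)) / ((n : ℂ) + 1) ^ 2
          * z ^ (n + 1))) := by
        rw [← tsum_mul_left, ← Summable.tsum_add ht1 (ht2.mul_left 2)]
    _ = 3 * (∑' k : ℕ, z^(k+1)/((k:ℂ)+1)^3)
        + (∑' k : ℕ, z^(k+1)/((k:ℂ)+1)^2) * (-Complex.log (1-z)) := hfull.tsum_eq
    _ = 3 * (∑' k : ℕ, z ^ (k + 1) / ((k : ℂ) + 1) ^ 3) -
        (∑' k : ℕ, z ^ (k + 1) / ((k : ℂ) + 1) ^ 2) * Complex.log (1 - z) := by ring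
end
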